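/- arXiv:2008.04012 — 3 statements merged into one kernel-verified Lean document; each statement's English description precedes it below -/
import Mathlib

section
/- Let α > 0 be real and let b : ℕ → ℝ be any sequence with |b(n)| < 1 for all n. On the space V of finitely supported functions x : ℕ × Fin 2 → ℝ, define the block-diagonal Hamiltonian H by (H x)(n, 0) = (4n+2)·x(n, 0) + x(n, 1) and (H x)(n, 1) = α²·x(n, 0) + (4n+2)·x(n, 1), and the bilinear form ⟨x, y⟩_Θ = Σ_{n∈ℕ} [ α·x(n,0)·y(n,0) + b(n)·(x(n,0)·y(n,1) + x(n,1)·y(n,0)) + (1/α)·x(n,1)·y(n,1) ]. Then ⟨·,·⟩_Θ is a symmetric positive-definite bilinear form on V (an inner product), and H is symmetric with respect to it: ⟨H x, y⟩_Θ = ⟨x, H y⟩_Θ for all x, y ∈ V. -/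
/-- The block-diagonal Hamiltonian acting on functions `x : ℕ × Fin 2 → ℝ`:
`(H x)(n, 0) = (4n+2)·x(n,0) + x(n,1)`, `(H x)(n, 1) = α²·x(n,0) + (4n+2)·x(n,1)`. -/
noncomputable def blockHam (α : ℝ) (x : ℕ × Fin 2 → ℝ) : ℕ × Fin 2 → ℝ :=
  fun p =>
    if p.2 = 0 then (4 * (p.1 : ℝ) + 2) * x (p.1, 0) + x (p.1, 1)
    else α ^ 2 * x (p.1, 0) + (4 * (p.1 : ℝ) + 2) * x (p.1, 1)

/-- The bilinear form `⟨x, y⟩_Θ` induced by the block-diagonal metric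
`Θ = ⊕ₙ [[α, b n], [b n, 1/α]]`. -/
noncomputable def ipTheta (α : ℝ) (b : ℕ → ℝ) (x y : ℕ × Fin 2 → ℝ) : ℝ :=
  ∑ᶠ n : ℕ, (α * x (n, 0) * y (n, 0)
    + b n * (x (n, 0) * y (n, 1) + x (n, 1) * y (n, 0))
    + (1 / α) * x (n, 1) * y (n, 1))

lemma supp_aux (x : ℕ × Fin 2 → ℝ) (hx : (Function.support x).Finite)
    (f : ℕ → ℝ) (hf : ∀ n, x (n,0) = 0 → x (n,1) = 0 → f n = 0) :
    (Function.support f).Finite := by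
  apply Set.Finite.subset (hx.image Prod.fst)
  intro n hn
  by_contra h
  have h0 : x (n,0) = 0 := by
    by_contra h0; exact h ⟨(n,0), h0, rfl⟩
  have h1 : x (n,1) = 0 := by
    by_contra h1; exact h ⟨(n,1), h1, rfl⟩
  exact hn (hf n h0 h1)

lemma term_supp (α : ℝ) (b : ℕ → ℝ) (x y : ℕ × Fin 2 → ℝ)
    (hx : (Function.support x).Finite) :
    (Function.support (fun n => α * x (n, 0) * y (n, 0)
      + b n * (x (n, 0) * y (n, 1) + x (n, 1) * y (n, 0))
      + (1 / α) * x (n, 1) * y (n, 1))).Finite := by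
  apply supp_aux x hx
  intro n h0 h1
  simp [h0, h1]

lemma blockHam0 (α : ℝ) (x : ℕ × Fin 2 → ℝ) (n : ℕ) :
    blockHam α x (n, 0) = (4 * (n : ℝ) + 2) * x (n, 0) + x (n, 1) := by
  simp [blockHam]

lemma blockHam1 (α : ℝ) (x : ℕ × Fin 2 → ℝ) (n : ℕ) :
    blockHam α x (n, 1) = α ^ 2 * x (n, 0) + (4 * (n : ℝ) + 2) * x (n, 1) := by
  simp [blockHam]

lemma quad_nonneg (α u v c : ℝ) (hα : 0 < α) (hc : |c| < 1) :
    0 ≤ α * u * u + c * (u * v + v * u) + 1 / α * v * v := by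
  have hc2 : c ^ 2 < 1 := by nlinarith [abs_nonneg c, sq_abs c]
  have key : α * (α * u * u + c * (u * v + v * u) + 1 / α * v * v)
      = (α * u + c * v) ^ 2 + (1 - c ^ 2) * v ^ 2 := by
    field_simp; ring
  nlinarith [sq_nonneg (α * u + c * v), sq_nonneg v, mul_pos hα hα]

lemma quad_pos (α u v c : ℝ) (hα : 0 < α) (hc : |c| < 1) (h : u ≠ 0 ∨ v ≠ 0) :
    0 < α * u * u + c * (u * v + v * u) + 1 / α * v * v := by
  have hc2 : c ^ 2 < 1 := by nlinarith [abs_nonneg c, sq_abs c]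
  have key : α * (α * u * u + c * (u * v + v * u) + 1 / α * v * v)
      = (α * u + c * v) ^ 2 + (1 - c ^ 2) * v ^ 2 := by
    field_simp; ring
  rcases eq_or_ne v 0 with hv | hv
  · have hu : u ≠ 0 := by subst hv; tauto
    have h1 : 0 < (α * u) ^ 2 := by positivity
    subst hv
    nlinarith [h1]
  · have h2 : 0 < v * v := mul_self_pos.mpr hv
    nlinarith [sq_nonneg (α * u + c * v), mul_pos (sub_pos.mpr hc2) h2]

/-- For `α > 0` and any sequence `b` with `|b n| < 1`, on finitely supported
`x : ℕ × Fin 2 → ℝ` the form `⟨·,·⟩_Θ` is bilinear, symmetric, and positive definite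
(an inner product), and the block-diagonal Hamiltonian `H` with blocks
`[[4n+2, 1], [α², 4n+2]]` is symmetric with respect to it. -/
theorem stmt_9 (α : ℝ) (hα : 0 < α) (b : ℕ → ℝ) (hb : ∀ n, |b n| < 1) :
    -- bilinearity (additivity and homogeneity in each argument)
    (∀ x x' y : ℕ × Fin 2 → ℝ, (Function.support x).Finite →
      (Function.support x').Finite → (Function.support y).Finite →
      ipTheta α b (x + x') y = ipTheta α b x y + ipTheta α b x' y ∧
      ipTheta α b y (x + x') = ipTheta α b y x + ipTheta α b y x') ∧
    (∀ (s : ℝ) (x y : ℕ × Fin 2 → ℝ),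
      ipTheta α b (s • x) y = s * ipTheta α b x y ∧
      ipTheta α b x (s • y) = s * ipTheta α b x y) ∧
    -- symmetry
    (∀ x y : ℕ × Fin 2 → ℝ, ipTheta α b x y = ipTheta α b y x) ∧
    -- positive definiteness
    (∀ x : ℕ × Fin 2 → ℝ, (Function.support x).Finite → x ≠ 0 →
      0 < ipTheta α b x x) ∧
    -- symmetry of the Hamiltonian with respect to the form
    (∀ x y : ℕ × Fin 2 → ℝ, (Function.support x).Finite →
      (Function.support y).Finite →
      ipTheta α b (blockHam α x) y = ipTheta α b x (blockHam α y)) := by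
  have hα' : α ≠ 0 := ne_of_gt hα
  refine ⟨?_, ?_, ?_, ?_, ?_⟩
  · intro x x' y hx hx' hy
    constructor
    · unfold ipTheta
      rw [← finsum_add_distrib (term_supp α b x y hx) (term_supp α b x' y hx')]
      apply finsum_congr; intro n
      simp only [Pi.add_apply]; ring
    · unfold ipTheta
      rw [← finsum_add_distrib (term_supp α b y x hy) (term_supp α b y x' hy)]
      apply finsum_congr; intro n
      simp only [Pi.add_apply]; ring
  · intro s x y
    constructor
    · unfold ipTheta
      rw [← smul_eq_mul, smul_finsum]
      apply finsum_congr; intro n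
      simp only [Pi.smul_apply, smul_eq_mul]; ring
    · unfold ipTheta
      rw [← smul_eq_mul, smul_finsum]
      apply finsum_congr; intro n
      simp only [Pi.smul_apply, smul_eq_mul]; ring
  · intro x y
    unfold ipTheta
    apply finsum_congr; intro n; ring
  · intro x hx hne
    unfold ipTheta
    have hf := term_supp α b x x hx
    rw [finsum_eq_sum _ hf]
    obtain ⟨p, hp⟩ : ∃ p, x p ≠ 0 := by
      by_contra h; push_neg at h; exact hne (funext h)
    obtain ⟨n, i⟩ := p
    have hkey : x (n, 0) ≠ 0 ∨ x (n, 1) ≠ 0 := by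
      fin_cases i
      · exact Or.inl hp
      · exact Or.inr hp
    have hpos : 0 < α * x (n, 0) * x (n, 0)
        + b n * (x (n, 0) * x (n, 1) + x (n, 1) * x (n, 0))
        + 1 / α * x (n, 1) * x (n, 1) := quad_pos α _ _ _ hα (hb n) hkey
    apply Finset.sum_pos'
    · intro m _
      exact quad_nonneg α _ _ _ hα (hb m)
    · refine ⟨n, ?_, hpos⟩
      rw [Set.Finite.mem_toFinset]
      exact ne_of_gt hpos
  · intro x y hx hy
    unfold ipTheta
    apply finsum_congr; intro n
    rw [blockHam0, blockHam1, blockHam0, blockHam1]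
    field_simp
    ring
end

section
/- Let α be real, q ∈ {1, −1}, and c > 0. Define φ : ℝ → ℂ by φ(x) = (x − i·c)^(1/2 − q·α) · exp(−(x − i·c)²/2), where z^w denotes the principal complex power. Then φ is twice differentiable and for every real x, −φ''(x) + ((x − i·c)² + (α² − 1/4)/(x − i·c)²)·φ(x) = (2 − 2·q·α)·φ(x). -/
open Complex

/-!
Write `z = x - ic` and `ψ_s(z) = z ^ s · exp (-z² / 2)`. Since `z` stays off the branch cut,
`ψ_s` is holomorphic there with logarithmic derivative `s / z - z`, so
`ψ_s'' = (s (s - 1) / z² - (2 s + 1) + z²) ψ_s`. For `s = 1/2 - qα` and `q² = 1` one has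
`s (s - 1) = α² - 1/4` and `2 s + 1 = 2 - 2qα`, which is the Schrödinger equation.
-/

namespace PTOscillator

noncomputable def groundState (s z : ℂ) : ℂ := z ^ s * exp (-z ^ 2 / 2)

variable {s z : ℂ}

theorem hasDerivAt_groundState (hz : z ∈ slitPlane) :
    HasDerivAt (groundState s) ((s / z - z) * groundState s z) z := by
  have hpow : HasDerivAt (fun w : ℂ => w ^ s) (s * z ^ (s - 1)) z := by
    simpa using (hasDerivAt_id z).cpow_const (c := s) hz
  have hexp : HasDerivAt (fun w : ℂ => exp (-w ^ 2 / 2)) (-z * exp (-z ^ 2 / 2)) z :=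
    (((hasDerivAt_pow 2 z).fun_neg).div_const 2).cexp.congr_deriv (by push_cast; ring)
  refine (hpow.mul hexp).congr_deriv ?_
  rw [groundState, cpow_sub _ _ (slitPlane_ne_zero hz), cpow_one]
  field_simp [slitPlane_ne_zero hz]
  ring

theorem hasDerivAt_logDeriv_mul_groundState (hz : z ∈ slitPlane) :
    HasDerivAt (fun w => (s / w - w) * groundState s w)
      ((s * (s - 1) / z ^ 2 - (2 * s + 1) + z ^ 2) * groundState s z) z := by
  have hz0 := slitPlane_ne_zero hz
  have hlog : HasDerivAt (fun w => s / w - w) (-s / z ^ 2 - 1) z :=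
    (((hasDerivAt_inv hz0).const_mul s).sub (hasDerivAt_id z)).congr_deriv (by ring)
  refine (hlog.mul (hasDerivAt_groundState hz)).congr_deriv ?_
  field_simp
  ring

theorem sub_I_mul_mem_slitPlane (x : ℝ) {c : ℝ} (hc : c ≠ 0) : (x : ℂ) - I * c ∈ slitPlane := by
  simp [mem_slitPlane_iff, hc]

end PTOscillator

open PTOscillator

/-- For real `α`, `q ∈ {1, −1}`, `c > 0`, the function
`φ(x) = (x − ic)^(1/2 − qα) · exp(−(x − ic)²/2)` (principal complex power) is twice
differentiable and solves the PT-symmetric harmonic oscillator Schrödinger equation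
`−φ'' + ((x − ic)² + (α² − 1/4)/(x − ic)²) φ = (2 − 2qα) φ`. -/
theorem stmt_12 (α q c : ℝ) (hq : q = 1 ∨ q = -1) (hc : 0 < c)
    (φ : ℝ → ℂ)
    (hφ : ∀ x : ℝ, φ x =
      ((x : ℂ) - Complex.I * (c : ℂ)) ^ ((1 / 2 : ℂ) - (q : ℂ) * (α : ℂ)) *
        Complex.exp (-((x : ℂ) - Complex.I * (c : ℂ)) ^ 2 / 2)) :
    ∃ φ' φ'' : ℝ → ℂ,
      (∀ x : ℝ, HasDerivAt φ (φ' x) x) ∧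
      (∀ x : ℝ, HasDerivAt φ' (φ'' x) x) ∧
      (∀ x : ℝ,
        -φ'' x + (((x : ℂ) - Complex.I * (c : ℂ)) ^ 2 +
            ((α : ℂ) ^ 2 - 1 / 4) / ((x : ℂ) - Complex.I * (c : ℂ)) ^ 2) * φ x =
          (2 - 2 * (q : ℂ) * (α : ℂ)) * φ x) := by
  set s : ℂ := 1 / 2 - q * α
  set z : ℝ → ℂ := fun x => x - I * c
  have hφψ : φ = fun x => groundState s (z x) := funext hφ
  have hs : s * (s - 1) = α ^ 2 - 1 / 4 := by
    have hq2 : (q : ℂ) ^ 2 = 1 := by rcases hq with rfl | rfl <;> norm_num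
    linear_combination (α : ℂ) ^ 2 * hq2
  refine ⟨fun x => (s / z x - z x) * groundState s (z x),
    fun x => (s * (s - 1) / z x ^ 2 - (2 * s + 1) + z x ^ 2) * groundState s (z x),
    fun x => ?_, fun x => ?_, fun x => ?_⟩
  · rw [hφψ]
    exact ((hasDerivAt_groundState (sub_I_mul_mem_slitPlane x hc.ne')).comp_sub_const
      _ _).comp_ofReal
  · exact ((hasDerivAt_logDeriv_mul_groundState (sub_I_mul_mem_slitPlane x hc.ne')).comp_sub_const
      _ _).comp_ofReal
  · rw [hφψ, hs]
    ring
end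

section
/- Let α be real, q ∈ {1, −1}, and c > 0. Define φ : ℝ → ℂ by φ(x) = (x − i·c)^(1/2 − q·α) · exp(−(x − i·c)²/2) · ((1 − q·α) − (x − i·c)²), where z^w denotes the principal complex power. Then φ is twice differentiable and for every real x, −φ''(x) + ((x − i·c)² + (α² − 1/4)/(x − i·c)²)·φ(x) = (6 − 2·q·α)·φ(x). -/
/-!
On the line `r = x - ic` we stay in the slit plane, so `φ(x) = ψ(r)` with the holomorphic
`ψ(r) = r ^ w * u(r)`, `w = 1/2 - qα` and `u(r) = e^{-r²/2} (a - r²)`, `a = 1 - qα`.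
By Leibniz, `ψ'' = r ^ w (w(w-1)/r² u + 2w/r u' + u'')`, and `w(w-1) = q²α² - 1/4 = G`,
so the power `r ^ w` absorbs the centrifugal term:
`-ψ'' + (r² + G/r²) ψ = r ^ w (-u'' - 2w/r u' + r² u)`.
For the Gaussian factor this bracket is `(5 + 2w) u` exactly when `a = w + 1/2`.
-/

open Complex

lemma ofReal_sub_I_mul_mem_slitPlane (x : ℝ) {c : ℝ} (hc : c ≠ 0) :
    (x : ℂ) - I * c ∈ slitPlane :=
  mem_slitPlane_iff.2 (Or.inr (by simpa using hc))

lemma HasDerivAt.comp_ofReal_sub {f : ℂ → ℂ} {f' a : ℂ} {x : ℝ}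
    (hf : HasDerivAt f f' (x - a)) :
    HasDerivAt (fun x : ℝ => f (x - a)) f' x :=
  (hf.comp_sub_const (x : ℂ) a).comp_ofReal

section CpowMul

variable {w z : ℂ} {u : ℂ → ℂ}

lemma hasDerivAt_cpow_mul (hz : z ∈ slitPlane) {u' : ℂ} (hu : HasDerivAt u u' z) :
    HasDerivAt (fun z => z ^ w * u z) (z ^ w * (w / z * u z + u')) z := by
  refine ((hasStrictDerivAt_cpow_const hz).hasDerivAt.mul hu).congr_deriv ?_
  rw [cpow_sub _ _ (slitPlane_ne_zero hz), cpow_one]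
  field_simp

lemma hasDerivAt_cpow_mul_deriv (hz : z ∈ slitPlane) {u₁ : ℂ → ℂ} {u₂ : ℂ}
    (hu : HasDerivAt u (u₁ z) z) (hu₁ : HasDerivAt u₁ u₂ z) :
    HasDerivAt (fun z => z ^ w * (w / z * u z + u₁ z))
      (z ^ w * (w * (w - 1) / z ^ 2 * u z + 2 * w / z * u₁ z + u₂)) z := by
  have hz0 := slitPlane_ne_zero hz
  have hinv : HasDerivAt (fun z => w / z) (-w / z ^ 2) z := by
    simpa [div_eq_mul_inv, neg_div] using (hasDerivAt_inv hz0).const_mul w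
  refine (hasDerivAt_cpow_mul hz ((hinv.fun_mul hu).fun_add hu₁)).congr_deriv ?_
  field_simp
  ring

end CpowMul

section GaussLaguerre

variable {z : ℂ}

lemma hasDerivAt_exp_neg_sq_div_two_mul {p : ℂ → ℂ} {p' : ℂ} (hp : HasDerivAt p p' z) :
    HasDerivAt (fun z => exp (-z ^ 2 / 2) * p z) (exp (-z ^ 2 / 2) * (p' - z * p z)) z := by
  have hg : HasDerivAt (fun z : ℂ => -z ^ 2 / 2) (-z) z := by
    exact ((hasDerivAt_pow 2 z).neg.div_const 2).congr_deriv (by norm_num; ring)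
  exact (hg.cexp.mul hp).congr_deriv (by ring)

variable (a : ℂ)

lemma hasDerivAt_gaussLaguerre :
    HasDerivAt (fun z => exp (-z ^ 2 / 2) * (a - z ^ 2))
      (exp (-z ^ 2 / 2) * (z * (z ^ 2 - (a + 2)))) z := by
  have hp : HasDerivAt (fun z : ℂ => a - z ^ 2) (-(2 * z)) z := by
    simpa using (hasDerivAt_pow 2 z).const_sub a
  exact (hasDerivAt_exp_neg_sq_div_two_mul hp).congr_deriv (by ring)

lemma hasDerivAt_gaussLaguerre_deriv :
    HasDerivAt (fun z => exp (-z ^ 2 / 2) * (z * (z ^ 2 - (a + 2))))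
      (exp (-z ^ 2 / 2) * (-z ^ 4 + (a + 5) * z ^ 2 - (a + 2))) z := by
  have hp : HasDerivAt (fun z : ℂ => z * (z ^ 2 - (a + 2))) (3 * z ^ 2 - (a + 2)) z := by
    have := (hasDerivAt_id z).mul ((hasDerivAt_pow 2 z).sub_const (a + 2))
    simp only [id] at this
    exact this.congr_deriv (by ring)
  exact (hasDerivAt_exp_neg_sq_div_two_mul hp).congr_deriv (by ring)

lemma gaussLaguerre_radial_eq {w : ℂ} (hz : z ≠ 0) (ha : a = w + 1 / 2) :
    -(exp (-z ^ 2 / 2) * (-z ^ 4 + (a + 5) * z ^ 2 - (a + 2))) -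
        2 * w / z * (exp (-z ^ 2 / 2) * (z * (z ^ 2 - (a + 2)))) +
        z ^ 2 * (exp (-z ^ 2 / 2) * (a - z ^ 2)) =
      (5 + 2 * w) * (exp (-z ^ 2 / 2) * (a - z ^ 2)) := by
  subst ha
  field_simp
  ring

end GaussLaguerre

/-- For real `α`, `q ∈ {1, −1}`, `c > 0`, the function
`φ(x) = (x − ic)^(1/2 − qα) · exp(−(x − ic)²/2) · ((1 − qα) − (x − ic)²)` (principal
complex power) is twice differentiable and solves the PT-symmetric harmonic oscillator
Schrödinger equation `−φ'' + ((x − ic)² + (α² − 1/4)/(x − ic)²) φ = (6 − 2qα) φ`. -/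
theorem stmt_13 (α q c : ℝ) (hq : q = 1 ∨ q = -1) (hc : 0 < c)
    (φ : ℝ → ℂ)
    (hφ : ∀ x : ℝ, φ x =
      ((x : ℂ) - Complex.I * (c : ℂ)) ^ ((1 / 2 : ℂ) - (q : ℂ) * (α : ℂ)) *
        Complex.exp (-((x : ℂ) - Complex.I * (c : ℂ)) ^ 2 / 2) *
        ((1 - (q : ℂ) * (α : ℂ)) - ((x : ℂ) - Complex.I * (c : ℂ)) ^ 2)) :
    ∃ φ' φ'' : ℝ → ℂ,
      (∀ x : ℝ, HasDerivAt φ (φ' x) x) ∧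
      (∀ x : ℝ, HasDerivAt φ' (φ'' x) x) ∧
      (∀ x : ℝ,
        -φ'' x + (((x : ℂ) - Complex.I * (c : ℂ)) ^ 2 +
            ((α : ℂ) ^ 2 - 1 / 4) / ((x : ℂ) - Complex.I * (c : ℂ)) ^ 2) * φ x =
          (6 - 2 * (q : ℂ) * (α : ℂ)) * φ x) := by
  have hr (x : ℝ) := ofReal_sub_I_mul_mem_slitPlane x hc.ne'
  set w : ℂ := 1 / 2 - q * α
  set a : ℂ := 1 - q * α
  have hψ : φ = fun x : ℝ => (fun z => z ^ w * (exp (-z ^ 2 / 2) * (a - z ^ 2))) (x - I * c) :=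
    funext fun x => (hφ x).trans (mul_assoc _ _ _)
  subst hψ
  have h1 (x : ℝ) :=
    (hasDerivAt_cpow_mul (w := w) (hr x) (hasDerivAt_gaussLaguerre a)).comp_ofReal_sub
  have h2 (x : ℝ) := (hasDerivAt_cpow_mul_deriv (w := w) (hr x) (hasDerivAt_gaussLaguerre a)
      (hasDerivAt_gaussLaguerre_deriv a)).comp_ofReal_sub
  refine ⟨_, _, h1, h2, fun x => ?_⟩
  have hG : w * (w - 1) = (α : ℂ) ^ 2 - 1 / 4 := by
    have hq2 : (q : ℂ) ^ 2 = 1 := by rcases hq with rfl | rfl <;> norm_num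
    linear_combination (α : ℂ) ^ 2 * hq2
  have hu := gaussLaguerre_radial_eq a (slitPlane_ne_zero (hr x)) (w := w) (by ring)
  rw [← hG]
  linear_combination (x - I * c : ℂ) ^ w * hu
end
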